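/- For n variables, the Schur function equals the bialternant: s_λ(x₁,...,x_n) = det(x_i^{λ_j+n-j})_{1≤i,j≤n} / det(x_i^{n-j})_{1≤i,j≤n}, where the denominator is the Vandermonde determinant ∏_{1≤i<j≤n}(x_i - x_j). -/

import Mathlib

/-- Complete homogeneous symmetric function of a list, defined recursively. -/
noncomputable def hh : List ℂ → ℕ → ℂ
  | _, 0 => 1
  | [], _+1 => 0
  | a :: l, m+1 => a * hh (a :: l) m + hh l (m+1)
  termination_by l m => (l.length, m)

/-- Elementary symmetric function of a list, defined recursively. -/
noncomputable def ee : List ℂ → ℕ → ℂ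
  | _, 0 => 1
  | [], _+1 => 0
  | a :: l, k+1 => a * ee l k + ee l (k+1)

@[simp] lemma hh_zero (l : List ℂ) : hh l 0 = 1 := by cases l <;> simp [hh]
@[simp] lemma hh_nil_succ (m : ℕ) : hh [] (m+1) = 0 := by simp [hh]
lemma hh_cons (a : ℂ) (l : List ℂ) (m : ℕ) :
    hh (a :: l) (m+1) = a * hh (a :: l) m + hh l (m+1) := by
  rw [hh]

@[simp] lemma ee_zero (l : List ℂ) : ee l 0 = 1 := by cases l <;> simp [ee]
@[simp] lemma ee_nil_succ (k : ℕ) : ee [] (k+1) = 0 := by simp [ee]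
lemma ee_cons (a : ℂ) (l : List ℂ) (k : ℕ) :
    ee (a :: l) (k+1) = a * ee l k + ee l (k+1) := rfl

lemma ee_eq_zero : ∀ (l : List ℂ) (k : ℕ), l.length < k → ee l k = 0 := by
  intro l
  induction l with
  | nil => intro k hk; cases k with
    | zero => omega
    | succ k => simp
  | cons a l ih =>
    intro k hk
    cases k with
    | zero => simp at hk
    | succ k =>
      simp only [List.length_cons] at hk
      rw [ee_cons, ih k (by omega), ih (k+1) (by omega)]
      ring

lemma hh_sub (a b : ℂ) (l : List ℂ) : ∀ m : ℕ,
    hh (a :: l) (m+1) - hh (b :: l) (m+1) = (a - b) * hh (a :: b :: l) m := by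
  intro m
  induction m with
  | zero => simp only [hh_cons, hh_zero]; ring
  | succ m ih =>
    rw [hh_cons a l (m+1), hh_cons b l (m+1), hh_cons a (b :: l) m]
    linear_combination a * ih

lemma hh_swap (a b : ℂ) (l : List ℂ) : ∀ m : ℕ, hh (a :: b :: l) m = hh (b :: a :: l) m := by
  intro m
  induction m with
  | zero => simp
  | succ m ih =>
    rw [hh_cons a (b :: l) m, hh_cons b (a :: l) m]
    have h1 : hh (a :: l) (m+1) - hh (b :: l) (m+1) = (a - b) * hh (a :: b :: l) m := by
      cases m with
      | zero => simpa using hh_sub a b l 0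
      | succ m => exact hh_sub a b l (m+1)
    rw [← ih]
    linear_combination -h1

lemma hh_perm {l₁ l₂ : List ℂ} (h : l₁.Perm l₂) : ∀ m, hh l₁ m = hh l₂ m := by
  induction h with
  | nil => intro m; rfl
  | cons a h ih =>
    intro m
    induction m with
    | zero => simp
    | succ m ihm => rw [hh_cons, hh_cons, ihm, ih (m+1)]
  | swap a b l => intro m; exact hh_swap b a l m
  | trans h1 h2 ih1 ih2 => intro m; rw [ih1 m, ih2 m]

lemma sum_C (l : List ℂ)
    (hB : ∀ m, ∑ k ∈ Finset.range (m+1), (-1:ℂ)^k * ee l k * hh l (m-k)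
      = if m = 0 then 1 else 0) (a : ℂ) :
    ∀ m, ∑ k ∈ Finset.range (m+1), (-1:ℂ)^k * ee l k * hh (a::l) (m-k) = a^m := by
  intro m
  induction m with
  | zero => simp
  | succ m ih =>
    rw [Finset.sum_range_succ]
    have step : ∀ k ∈ Finset.range (m+1), (-1:ℂ)^k * ee l k * hh (a::l) (m+1-k)
        = a * ((-1)^k * ee l k * hh (a::l) (m-k)) + (-1)^k * ee l k * hh l (m+1-k) := by
      intro k hk
      rw [Finset.mem_range] at hk
      have h2 : m + 1 - k = (m - k) + 1 := by omega
      rw [h2, hh_cons]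
      ring
    rw [Finset.sum_congr rfl step, Finset.sum_add_distrib, ← Finset.mul_sum, ih]
    have hT : ∑ k ∈ Finset.range (m+1+1), (-1:ℂ)^k * ee l k * hh l (m+1-k) = 0 := by
      rw [hB (m+1)]; simp
    rw [Finset.sum_range_succ] at hT
    simp only [Nat.sub_self, hh_zero, mul_one] at hT ⊢
    linear_combination hT

lemma sum_B : ∀ (l : List ℂ) (m : ℕ),
    ∑ k ∈ Finset.range (m+1), (-1:ℂ)^k * ee l k * hh l (m-k)
      = if m = 0 then 1 else 0 := by
  intro l
  induction l with
  | nil =>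
    intro m
    cases m with
    | zero => simp
    | succ m =>
      rw [Finset.sum_eq_zero, if_neg (by omega)]
      intro k hk
      cases k with
      | zero => simp
      | succ k => simp
  | cons a l ih =>
    intro m
    have hC := sum_C l ih a
    have expand : ∀ k ∈ Finset.range (m+1), (-1:ℂ)^k * ee (a::l) k * hh (a::l) (m-k)
        = (-1)^k * ee l k * hh (a::l) (m-k)
          + (if k = 0 then 0 else a * ((-1)^k * ee l (k-1) * hh (a::l) (m-k))) := by
      intro k _
      cases k with
      | zero => simp
      | succ k => rw [ee_cons]; simp only [if_neg (Nat.succ_ne_zero k), Nat.add_sub_cancel]; ring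
    rw [Finset.sum_congr rfl expand, Finset.sum_add_distrib, hC m]
    cases m with
    | zero => simp
    | succ m =>
      have h2 : ∑ k ∈ Finset.range (m+1+1),
          (if k = 0 then (0:ℂ) else a * ((-1:ℂ)^k * ee l (k-1) * hh (a::l) (m+1-k)))
          = -(a * a^m) := by
        rw [Finset.sum_range_succ']
        have step2 : ∀ i ∈ Finset.range (m+1),
            (if i+1 = 0 then (0:ℂ) else a * ((-1:ℂ)^(i+1) * ee l (i+1-1) * hh (a::l) (m+1-(i+1))))
            = -a * ((-1)^i * ee l i * hh (a::l) (m-i)) := by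
          intro i hi
          rw [if_neg (Nat.succ_ne_zero i)]
          have e1 : i + 1 - 1 = i := rfl
          have e2 : m + 1 - (i+1) = m - i := by omega
          rw [e1, e2, pow_succ]
          ring
        rw [Finset.sum_congr rfl step2, ← Finset.mul_sum, hC m, if_pos rfl]
        ring
      rw [h2, if_neg (by omega), pow_succ]
      ring
/-- The complete homogeneous symmetric polynomial `h_k(x₁,…,x_n)`, as the sum of all
monomials of degree `k` (indexed by weakly increasing maps `Fin k → Fin n`). -/
noncomputable def hc (n : ℕ) (x : Fin n → ℂ) (k : ℕ) : ℂ :=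
  ∑ f ∈ Finset.univ.filter (fun f : Fin k → Fin n => Monotone f), ∏ i, x (f i)

/-- `h` extended by `0` to negative indices. -/
noncomputable def hcInt (n : ℕ) (x : Fin n → ℂ) (m : ℤ) : ℂ :=
  if m < 0 then 0 else hc n x m.toNat

/-- The Schur polynomial `s_λ(x₁,…,x_n)` defined by Jacobi–Trudi:
`s_λ = det(h_{λ_i - i + j})`. -/
noncomputable def schurN (n : ℕ) (x : Fin n → ℂ) (lam : List ℕ) : ℂ :=
  Matrix.det (Matrix.of fun i j : Fin lam.length =>
    hcInt n x ((lam.get i : ℤ) + (j : ℕ) - (i : ℕ)))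
lemma monotone_cons_zero {k n : ℕ} {g : Fin k → Fin (n+1)} (hg : Monotone g) :
    Monotone (Fin.cons (0 : Fin (n+1)) g : Fin (k+1) → Fin (n+1)) := by
  intro a b hab
  induction a using Fin.cases with
  | zero => simpa using Fin.zero_le _
  | succ i =>
    induction b using Fin.cases with
    | zero => exact absurd hab (by simp [Fin.lt_iff_val_lt_val, Fin.le_iff_val_le_val])
    | succ j =>
      rw [Fin.cons_succ, Fin.cons_succ]
      exact hg (by simpa [Fin.succ_le_succ_iff] using hab)

lemma hc_zero (n : ℕ) (x : Fin n → ℂ) : hc n x 0 = 1 := by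
  have h0 : ∀ f : Fin 0 → Fin n, Monotone f := fun f a b _ => a.elim0
  unfold hc
  rw [show (Finset.univ.filter (fun f : Fin 0 → Fin n => Monotone f)) = Finset.univ from
    Finset.filter_true_of_mem (fun f _ => h0 f)]
  simp

lemma hc_nilvar (k : ℕ) (x : Fin 0 → ℂ) : hc 0 x (k+1) = 0 := by
  unfold hc
  haveI : IsEmpty (Fin (k+1) → Fin 0) := ⟨fun f => (f 0).elim0⟩
  rw [Finset.univ_eq_empty]
  simp

lemma hc_rec (n k : ℕ) (x : Fin (n+1) → ℂ) :
    hc (n+1) x (k+1) = x 0 * hc (n+1) x k + hc n (x ∘ Fin.succ) (k+1) := by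
  unfold hc
  rw [← Finset.sum_filter_add_sum_filter_not
    (Finset.univ.filter (fun f : Fin (k+1) → Fin (n+1) => Monotone f)) (fun f => f 0 = 0)]
  congr 1
  · -- f 0 = 0 part
    rw [Finset.mul_sum]
    refine Finset.sum_bij' (fun f _ => f ∘ Fin.succ) (fun g _ => Fin.cons 0 g)
      ?_ ?_ ?_ ?_ ?_
    · intro f hf
      simp only [Finset.mem_filter, Finset.mem_univ, true_and] at hf ⊢
      exact hf.1.comp Fin.strictMono_succ.monotone
    · intro g hg
      simp only [Finset.mem_filter, Finset.mem_univ, true_and] at hg ⊢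
      exact ⟨monotone_cons_zero hg, Fin.cons_zero _ _⟩
    · intro f hf
      simp only [Finset.mem_filter, Finset.mem_univ, true_and] at hf
      funext i
      induction i using Fin.cases with
      | zero => simp only [Fin.cons_zero]; rw [hf.2]
      | succ j => simp only [Function.comp_apply, Fin.cons_succ]
    · intro g hg
      funext i
      simp only [Function.comp_apply, Fin.cons_succ]
    · intro f hf
      simp only [Finset.mem_filter, Finset.mem_univ, true_and] at hf
      rw [Fin.prod_univ_succ, hf.2]
      rfl
  · -- f 0 ≠ 0 part
    refine Finset.sum_bij' (fun f hf => fun idx =>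
        (f idx).pred (by
          simp only [Finset.mem_filter, Finset.mem_univ, true_and] at hf
          intro h0
          exact hf.2 (le_antisymm (h0 ▸ hf.1 (Fin.zero_le idx)) (Fin.zero_le _))))
      (fun g _ => Fin.succ ∘ g) ?_ ?_ ?_ ?_ ?_
    · intro f hf
      simp only [Finset.mem_filter, Finset.mem_univ, true_and] at hf ⊢
      intro a b hab
      simp only [Fin.pred_le_pred_iff]
      exact hf.1 hab
    · intro g hg
      simp only [Finset.mem_filter, Finset.mem_univ, true_and] at hg ⊢
      exact ⟨Fin.strictMono_succ.monotone.comp hg, Fin.succ_ne_zero _⟩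
    · intro f hf
      funext i
      simp [Fin.succ_pred]
    · intro g hg
      funext i
      simp [Fin.pred_succ]
    · intro f hf
      apply Finset.prod_congr rfl
      intro i _
      simp [Fin.succ_pred]

lemma hc_eq_hh (n : ℕ) : ∀ (x : Fin n → ℂ) (k : ℕ), hc n x k = hh (List.ofFn x) k := by
  induction n with
  | zero =>
    intro x k
    cases k with
    | zero => rw [hc_zero]; simp
    | succ k => rw [hc_nilvar]; simp
  | succ n ihn =>
    intro x k
    induction k with
    | zero => rw [hc_zero]; simp
    | succ k ihk =>
      rw [hc_rec, ihk, ihn (x ∘ Fin.succ) (k+1), List.ofFn_succ, hh_cons]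
      rfl
/-- `hh` extended by zero to negative indices. -/
noncomputable def hhZ (l : List ℂ) (m : ℤ) : ℂ := if m < 0 then 0 else hh l m.toNat

lemma hcInt_eq_hhZ (n : ℕ) (x : Fin n → ℂ) (m : ℤ) :
    hcInt n x m = hhZ (List.ofFn x) m := by
  unfold hcInt hhZ
  rw [hc_eq_hh]

lemma hhZ_perm {l₁ l₂ : List ℂ} (h : l₁.Perm l₂) (m : ℤ) : hhZ l₁ m = hhZ l₂ m := by
  unfold hhZ
  rw [hh_perm h]

lemma cons_eraseIdx_perm : ∀ (l : List ℂ) (i : ℕ) (h : i < l.length),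
    (l.get ⟨i, h⟩ :: l.eraseIdx i).Perm l := by
  intro l
  induction l with
  | nil => intro i h; simp at h
  | cons a t ih =>
    intro i h
    cases i with
    | zero => simp
    | succ i =>
      simp only [List.length_cons, Nat.succ_lt_succ_iff] at h
      have h1 : ((a :: t).get ⟨i+1, by simpa using h⟩ :: (a :: t).eraseIdx (i+1))
          = t.get ⟨i, h⟩ :: a :: t.eraseIdx i := by simp [List.eraseIdx]
      rw [h1]
      exact ((List.Perm.swap a _ _).trans ((ih i h).cons a))

lemma sum_C' (l : List ℂ) (a : ℂ) (m : ℕ) :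
    ∑ k ∈ Finset.range (l.length + 1), (-1:ℂ)^k * ee l k * hhZ (a::l) ((m:ℤ) - k) = a^m := by
  set M := max m l.length with hM
  have hterm : ∀ k, k ≤ m → hhZ (a::l) ((m:ℤ) - k) = hh (a::l) (m - k) := by
    intro k hk
    unfold hhZ
    rw [if_neg (by omega)]
    congr 1
    omega
  have h1 : ∑ k ∈ Finset.range (M+1), (-1:ℂ)^k * ee l k * hhZ (a::l) ((m:ℤ) - k)
      = ∑ k ∈ Finset.range (l.length + 1), (-1:ℂ)^k * ee l k * hhZ (a::l) ((m:ℤ) - k) := by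
    rw [eq_comm]
    apply Finset.sum_subset (Finset.range_subset_range.mpr (by omega))
    intro k hk hk2
    rw [Finset.mem_range] at hk
    rw [Finset.mem_range, not_lt] at hk2
    rw [ee_eq_zero l k (by omega)]
    ring
  have h2 : ∑ k ∈ Finset.range (M+1), (-1:ℂ)^k * ee l k * hhZ (a::l) ((m:ℤ) - k)
      = ∑ k ∈ Finset.range (m+1), (-1:ℂ)^k * ee l k * hhZ (a::l) ((m:ℤ) - k) := by
    rw [eq_comm]
    apply Finset.sum_subset (Finset.range_subset_range.mpr (by omega))
    intro k hk hk2
    rw [Finset.mem_range] at hk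
    rw [Finset.mem_range, not_lt] at hk2
    unfold hhZ
    rw [if_pos (by omega)]
    ring
  have h3 : ∑ k ∈ Finset.range (m+1), (-1:ℂ)^k * ee l k * hhZ (a::l) ((m:ℤ)-k)
      = ∑ k ∈ Finset.range (m+1), (-1:ℂ)^k * ee l k * hh (a::l) (m-k) := by
    apply Finset.sum_congr rfl
    intro k hk
    rw [Finset.mem_range] at hk
    rw [hterm k (by omega)]
  rw [← h1, h2, h3]
  exact sum_C l (sum_B l) a m
/-- Matrix of signed elementary symmetric functions omitting one variable. -/
noncomputable def EE (n : ℕ) (x : Fin n → ℂ) : Matrix (Fin n) (Fin n) ℂ :=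
  Matrix.of fun r k => (-1:ℂ)^(n - 1 - (k:ℕ)) * ee ((List.ofFn x).eraseIdx r) (n - 1 - (k:ℕ))

/-- The (transposed, extended) Jacobi–Trudi matrix. -/
noncomputable def HH (n : ℕ) (x : Fin n → ℂ) (lam : List ℕ) : Matrix (Fin n) (Fin n) ℂ :=
  Matrix.of fun k j => hcInt n x ((lam.getD (j:ℕ) 0 : ℤ) + (k:ℕ) - (j:ℕ))

lemma A_eq_EE_mul_HH (n : ℕ) (x : Fin n → ℂ) (lam : List ℕ) :
    (Matrix.of fun r j : Fin n => x r ^ (lam.getD (j:ℕ) 0 + (n - 1 - (j:ℕ))))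
      = EE n x * HH n x lam := by
  ext r j
  simp only [Matrix.of_apply]
  rw [Matrix.mul_apply, eq_comm]
  set l := (List.ofFn x).eraseIdx r with hl
  have hlen : l.length = n - 1 := by
    rw [hl, List.length_eraseIdx]
    simp [r.isLt]
  have hperm : ((x r) :: l).Perm (List.ofFn x) := by
    have := cons_eraseIdx_perm (List.ofFn x) r (by simp)
    simpa using this
  set m : ℕ := lam.getD (j:ℕ) 0 + (n - 1 - (j:ℕ)) with hm
  have key : ∀ k : Fin n, EE n x r k.rev * HH n x lam k.rev j
      = (-1:ℂ)^(k:ℕ) * ee l (k:ℕ) * hhZ ((x r) :: l) ((m:ℤ) - (k:ℕ)) := by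
    intro k
    have hrev : ((Fin.rev k : Fin n) : ℕ) = n - 1 - (k:ℕ) := by
      rw [Fin.val_rev]; omega
    unfold EE HH
    simp only [Matrix.of_apply]
    rw [hrev]
    have e1 : n - 1 - (n - 1 - (k:ℕ)) = (k:ℕ) := by omega
    rw [e1, hcInt_eq_hhZ, ← hhZ_perm hperm]
    congr 2
    have hj : (j:ℕ) ≤ n - 1 := by omega
    have hk : (k:ℕ) ≤ n - 1 := by omega
    rw [hm]
    push_cast
    omega
  calc ∑ k : Fin n, EE n x r k * HH n x lam k j
      = ∑ k : Fin n, EE n x r k.rev * HH n x lam k.rev j := by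
        rw [← Equiv.sum_comp (Fin.revPerm) (fun k => EE n x r k * HH n x lam k j)]
        apply Finset.sum_congr rfl
        intro k _
        simp [Fin.revPerm_apply]
    _ = ∑ k : Fin n, (-1:ℂ)^(k:ℕ) * ee l (k:ℕ) * hhZ ((x r) :: l) ((m:ℤ) - (k:ℕ)) :=
        Finset.sum_congr rfl (fun k _ => key k)
    _ = ∑ k ∈ Finset.range n, (-1:ℂ)^k * ee l k * hhZ ((x r) :: l) ((m:ℤ) - k) :=
        Fin.sum_univ_eq_sum_range (fun kk => (-1:ℂ)^kk * ee l kk * hhZ ((x r) :: l) ((m:ℤ) - kk)) n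
    _ = x r ^ m := by
        have hn : n = l.length + 1 := by
          have : 0 < n := Fin.pos r
          omega
        rw [hn]
        exact sum_C' l (x r) m

lemma det_HH (n : ℕ) (lam : List ℕ) (hlen : lam.length ≤ n) (x : Fin n → ℂ) :
    (HH n x lam).det = schurN n x lam := by
  have hL : lam.length + (n - lam.length) = n := by omega
  set e : Fin lam.length ⊕ Fin (n - lam.length) ≃ Fin n :=
    finSumFinEquiv.trans (finCongr hL) with he
  have hval1 : ∀ i : Fin lam.length, ((e (Sum.inl i)) : ℕ) = (i:ℕ) := by
    intro i; simp [he]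
  have hval2 : ∀ i : Fin (n - lam.length), ((e (Sum.inr i)) : ℕ) = lam.length + (i:ℕ) := by
    intro i; simp [he]
  rw [← Matrix.det_submatrix_equiv_self e (HH n x lam)]
  have hsub : (HH n x lam).submatrix e e = Matrix.fromBlocks
      (Matrix.of fun i j : Fin lam.length => hcInt n x ((lam.get j : ℤ) + (i:ℕ) - (j:ℕ)))
      0
      (Matrix.of fun i j => (HH n x lam) (e (Sum.inr i)) (e (Sum.inl j)))
      (Matrix.of fun i j : Fin (n - lam.length) => hcInt n x ((i:ℤ) - (j:ℕ))) := by
    ext i j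
    cases i with
    | inl i =>
      cases j with
      | inl j =>
        simp only [Matrix.submatrix_apply, Matrix.fromBlocks_apply₁₁, Matrix.of_apply]
        unfold HH
        simp only [Matrix.of_apply]
        rw [hval1 i, hval1 j]
        congr 2
        rw [List.getD_eq_getElem lam 0 (by simpa using j.isLt)]
        simp [List.get_eq_getElem]
      | inr j =>
        simp only [Matrix.submatrix_apply, Matrix.fromBlocks_apply₁₂, Matrix.zero_apply]
        unfold HH
        simp only [Matrix.of_apply]
        rw [hval1 i, hval2 j]
        rw [List.getD_eq_default lam 0 (by omega)]
        unfold hcInt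
        rw [if_pos (by push_cast; omega)]
    | inr i =>
      cases j with
      | inl j =>
        simp only [Matrix.submatrix_apply, Matrix.fromBlocks_apply₂₁, Matrix.of_apply]
      | inr j =>
        simp only [Matrix.submatrix_apply, Matrix.fromBlocks_apply₂₂, Matrix.of_apply]
        unfold HH
        simp only [Matrix.of_apply]
        rw [hval2 i, hval2 j]
        rw [List.getD_eq_default lam 0 (by omega)]
        congr 1
        push_cast
        omega
  rw [hsub, Matrix.det_fromBlocks_zero₁₂]
  have hdet2 : (Matrix.of fun i j : Fin (n - lam.length) => hcInt n x ((i:ℤ) - (j:ℕ))).det = 1 := by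
    rw [Matrix.det_of_lowerTriangular _ (by
      intro i j hij
      simp only [Matrix.of_apply]
      unfold hcInt
      rw [if_pos (by
        have : (i:ℕ) < (j:ℕ) := hij
        push_cast
        omega)])]
    apply Finset.prod_eq_one
    intro i _
    simp only [Matrix.of_apply]
    unfold hcInt
    rw [if_neg (by omega), show (((i:ℕ):ℤ) - ((i:ℕ):ℤ)).toNat = 0 by omega, hc_zero]
  rw [hdet2, mul_one]
  unfold schurN
  rw [← Matrix.det_transpose]
  congr 1
lemma detA_eq (n : ℕ) (lam : List ℕ) (hlen : lam.length ≤ n) (x : Fin n → ℂ) :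
    (Matrix.of fun r j : Fin n => x r ^ (lam.getD (j:ℕ) 0 + (n - 1 - (j:ℕ)))).det
      = (EE n x).det * schurN n x lam := by
  rw [A_eq_EE_mul_HH n x lam, Matrix.det_mul, det_HH n lam hlen x]

lemma schurN_nil (n : ℕ) (x : Fin n → ℂ) : schurN n x [] = 1 := by
  unfold schurN
  exact Matrix.det_fin_zero

lemma detA0_eq (n : ℕ) (x : Fin n → ℂ) :
    (Matrix.of fun r j : Fin n => x r ^ (n - 1 - (j:ℕ))).det = (EE n x).det := by
  have h := detA_eq n [] (by simp) x
  rw [schurN_nil, mul_one] at h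
  rw [← h]
  congr 1
  ext r j
  simp

lemma vandermonde_part (n : ℕ) (x : Fin n → ℂ) :
    (Matrix.of fun i j : Fin n => x i ^ (n - 1 - (j:ℕ))).det
      = ∏ i : Fin n, ∏ j ∈ Finset.Ioi i, (x i - x j) := by
  rw [← Matrix.det_submatrix_equiv_self (Fin.revPerm)
    (Matrix.of fun i j : Fin n => x i ^ (n - 1 - (j:ℕ)))]
  have hsub : (Matrix.of fun i j : Fin n => x i ^ (n - 1 - (j:ℕ))).submatrix
      Fin.revPerm Fin.revPerm = Matrix.vandermonde (fun i : Fin n => x i.rev) := by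
    ext i j
    simp only [Matrix.submatrix_apply, Matrix.of_apply, Matrix.vandermonde_apply,
      Fin.revPerm_apply]
    congr 1
    rw [Fin.val_rev]
    omega
  rw [hsub, Matrix.det_vandermonde]
  rw [Finset.prod_sigma' Finset.univ (fun i => Finset.Ioi i)
      (fun i j => x (Fin.rev j) - x (Fin.rev i)),
    Finset.prod_sigma' Finset.univ (fun i => Finset.Ioi i) (fun i j => x i - x j)]
  refine Finset.prod_nbij' (fun p => ⟨Fin.rev p.2, Fin.rev p.1⟩)
    (fun p => ⟨Fin.rev p.2, Fin.rev p.1⟩) ?_ ?_ ?_ ?_ ?_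
  · intro p hp
    simp only [Finset.mem_sigma, Finset.mem_univ, Finset.mem_Ioi, true_and] at hp ⊢
    simpa using hp
  · intro p hp
    simp only [Finset.mem_sigma, Finset.mem_univ, Finset.mem_Ioi, true_and] at hp ⊢
    simpa using hp
  · intro p hp
    simp
  · intro p hp
    simp
  · intro p hp
    simp

/-- **Bialternant formula.**  For a partition `λ` of length `≤ n` (extended by zeros)
and distinct `x₁,…,x_n`, `s_λ(x) = det(x_i^{λ_j+n-j}) / det(x_i^{n-j})`, and the
denominator is the Vandermonde determinant `∏_{i<j} (x_i - x_j)`. -/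
theorem schur_bialternant (n : ℕ) (lam : List ℕ)
    (hsort : lam.Pairwise (· ≥ ·)) (hpos : ∀ a ∈ lam, 0 < a) (hlen : lam.length ≤ n)
    (x : Fin n → ℂ) (hx : Function.Injective x) :
    schurN n x lam =
      Matrix.det (Matrix.of fun i j : Fin n =>
          x i ^ (lam.getD (j : ℕ) 0 + (n - 1 - (j : ℕ)))) /
        Matrix.det (Matrix.of fun i j : Fin n => x i ^ (n - 1 - (j : ℕ))) ∧
    Matrix.det (Matrix.of fun i j : Fin n => x i ^ (n - 1 - (j : ℕ))) =
      ∏ i : Fin n, ∏ j ∈ Finset.Ioi i, (x i - x j) := by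
  have hvdm := vandermonde_part n x
  have hne : (Matrix.of fun i j : Fin n => x i ^ (n - 1 - (j:ℕ))).det ≠ 0 := by
    rw [hvdm]
    apply Finset.prod_ne_zero_iff.mpr
    intro i _
    apply Finset.prod_ne_zero_iff.mpr
    intro j hj
    have hij : i < j := Finset.mem_Ioi.mp hj
    exact sub_ne_zero.mpr (fun h => absurd (hx h) hij.ne)
  refine ⟨?_, hvdm⟩
  rw [eq_div_iff hne, detA_eq n lam hlen x, ← detA0_eq n x]
  ring
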